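/- Let F be a field of characteristic different from 2 and N = a + b with a, b ≥ 0. Then H_{a,b} equals the centralizer in Sp_N(F) of the element ε = diag(I_a, −I_{2b}, I_a). -/

import Mathlib

open scoped MatrixGroups Matrix

namespace Stmt9

variable (F : Type*) [Field F]

/-- Extension of a tuple `n : Fin k → ℕ` by zero to all of `ℕ`. -/
def nExt {k : ℕ} (n : Fin k → ℕ) : ℕ → ℕ := fun i => if h : i < k then n ⟨i, h⟩ else 0

/-- Partial sums `ν_j = n 0 + ⋯ + n (j-1)`. -/
def psum {k : ℕ} (n : Fin k → ℕ) (j : ℕ) : ℕ := ∑ i ∈ Finset.range j, nExt n i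

/-- Block index of a position `x` with respect to the composition `c` with `K` parts. -/
def blkIdxF (c : ℕ → ℕ) (K : ℕ) (x : ℕ) : ℕ :=
  ((Finset.range K).filter (fun j => (∑ i ∈ Finset.range (j + 1), c i) ≤ x)).card

/-- The symplectic form `J_N = [[0, w_N], [-w_N, 0]]`, `w_N` the antidiagonal matrix. -/
def Jmat (N : ℕ) : Matrix (Fin (2 * N)) (Fin (2 * N)) F :=
  fun i j => if (i : ℕ) + (j : ℕ) = 2 * N - 1 then (if (i : ℕ) < N then 1 else -1) else 0

/-- The symplectic group `Sp_N(F) = { g ∈ GL_{2N}(F) : ᵗg J_N g = J_N }` (as a set). -/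
def SpSet (N : ℕ) : Set (GL (Fin (2 * N)) F) :=
  { g | (g.val)ᵀ * Jmat F N * g.val = Jmat F N }

/-- The composition `(n_1, …, n_k, 2r, n_k, …, n_1)` of `2N` underlying the standard
parabolic subgroup of `Sp_N` attached to `(n_1, …, n_k; r)`. -/
def cSp {k : ℕ} (n : Fin k → ℕ) (r : ℕ) : ℕ → ℕ :=
  fun i => if i < k then nExt n i else if i = k then 2 * r else nExt n (2 * k - i)

/-- The standard parabolic subgroup `P_{(n_1,…,n_k;r)}` of `Sp_N` (as a set): block upper
triangular symplectic matrices with diagonal blocks `n_1, …, n_k, 2r, n_k, …, n_1`. -/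
def PparSp (N : ℕ) {k : ℕ} (n : Fin k → ℕ) (r : ℕ) : Set (GL (Fin (2 * N)) F) :=
  { g | g ∈ SpSet F N ∧ ∀ i j : Fin (2 * N),
      blkIdxF (cSp n r) (2 * k + 1) (j : ℕ) < blkIdxF (cSp n r) (2 * k + 1) (i : ℕ) →
        g.val i j = 0 }

/-- The standard Levi subgroup `M_{(n_1,…,n_k;r)}` of `Sp_N` (as a set). -/
def MparSp (N : ℕ) {k : ℕ} (n : Fin k → ℕ) (r : ℕ) : Set (GL (Fin (2 * N)) F) :=
  { g | g ∈ SpSet F N ∧ ∀ i j : Fin (2 * N),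
      blkIdxF (cSp n r) (2 * k + 1) (j : ℕ) ≠ blkIdxF (cSp n r) (2 * k + 1) (i : ℕ) →
        g.val i j = 0 }

/-- The doubled permutation `σ̃` of `[0, 2N)` attached to `σ ∈ S_N`:
`i ↦ σ i` and `2N - 1 - i ↦ 2N - 1 - σ i` for `i < N`. -/
def dPerm (N : ℕ) (σ : Equiv.Perm (Fin N)) : Equiv.Perm (Fin (2 * N)) :=
  (Equiv.permCongr (finSumFinEquiv.trans (finCongr (two_mul N).symm)))
    (Equiv.sumCongr σ (Fin.revPerm.trans (σ.trans Fin.revPerm)))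

/-- The matrix `j(h₁, h₂)`: for `h₁ = [[A, B], [C, D]]` of size `2a × 2a` (blocks of size
`a × a`) and `h₂` of size `2b × 2b`, the `2(a+b) × 2(a+b)` matrix with `A, B, C, D` in the
four corner `a × a` blocks and `h₂` in the central `2b × 2b` block. -/
def jEmbed (a b : ℕ) (h1 : Matrix (Fin (2 * a)) (Fin (2 * a)) F)
    (h2 : Matrix (Fin (2 * b)) (Fin (2 * b)) F) :
    Matrix (Fin (2 * (a + b))) (Fin (2 * (a + b))) F := fun x y =>
  if hx : (x : ℕ) < a then
    if hy : (y : ℕ) < a then h1 ⟨(x : ℕ), by omega⟩ ⟨(y : ℕ), by omega⟩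
    else if hy2 : a + 2 * b ≤ (y : ℕ) then
      h1 ⟨(x : ℕ), by omega⟩ ⟨(y : ℕ) - 2 * b, by have := y.isLt; omega⟩
    else 0
  else if hx2 : a + 2 * b ≤ (x : ℕ) then
    if hy : (y : ℕ) < a then
      h1 ⟨(x : ℕ) - 2 * b, by have := x.isLt; omega⟩ ⟨(y : ℕ), by omega⟩
    else if hy2 : a + 2 * b ≤ (y : ℕ) then
      h1 ⟨(x : ℕ) - 2 * b, by have := x.isLt; omega⟩ ⟨(y : ℕ) - 2 * b, by have := y.isLt; omega⟩
    else 0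
  else
    if hy : a ≤ (y : ℕ) ∧ (y : ℕ) < a + 2 * b then
      h2 ⟨(x : ℕ) - a, by omega⟩ ⟨(y : ℕ) - a, by omega⟩
    else 0

/-- Upper triangular invertible matrices. -/
def UTSet (M : ℕ) : Set (GL (Fin M) F) :=
  { g | ∀ i j : Fin M, (j : ℕ) < (i : ℕ) → g.val i j = 0 }

/-- The subgroup `H_{a,b} = j(Sp_a × Sp_b)` of `Sp_{a+b}` (as a set). -/
def HSet (a b : ℕ) : Set (GL (Fin (2 * (a + b))) F) :=
  { g | ∃ h1 : GL (Fin (2 * a)) F, h1 ∈ SpSet F a ∧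
        ∃ h2 : GL (Fin (2 * b)) F, h2 ∈ SpSet F b ∧ g.val = jEmbed F a b h1.val h2.val }

/-- The subgroup `P₀^H = j(B_a × B_b)`, `B_c` the upper triangular subgroup of `Sp_c`. -/
def P0HSp (a b : ℕ) : Set (GL (Fin (2 * (a + b))) F) :=
  { g | ∃ h1 : GL (Fin (2 * a)) F, h1 ∈ SpSet F a ∩ UTSet F (2 * a) ∧
        ∃ h2 : GL (Fin (2 * b)) F, h2 ∈ SpSet F b ∩ UTSet F (2 * b) ∧
          g.val = jEmbed F a b h1.val h2.val }

/-- A monomial matrix: exactly one nonzero entry in each row and in each column. -/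
def IsMonomial {M : ℕ} (A : Matrix (Fin M) (Fin M) F) : Prop :=
  (∀ i, ∃! j, A i j ≠ 0) ∧ (∀ j, ∃! i, A i j ≠ 0)

/-- Conjugation `g S g⁻¹` of a set by a group element. -/
def conjSet {M : ℕ} (g : GL (Fin M) F) (S : Set (GL (Fin M) F)) : Set (GL (Fin M) F) :=
  (fun h => g * h * g⁻¹) '' S

/-- Conjugation `σ S σ⁻¹` by the permutation matrix of `σ`. -/
def conjPerm {M : ℕ} (σ : Equiv.Perm (Fin M)) (S : Set (GL (Fin M) F)) :
    Set (GL (Fin M) F) :=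
  { g | ∃ p ∈ S, g.val = (p.val).submatrix σ.symm σ.symm }

def blkPair {k : ℕ} (aT bT : Fin k → ℕ) (x : ℕ) : ℕ :=
  ((Finset.range k).filter (fun j => psum aT (j + 1) + psum bT (j + 1) ≤ x)).card

def isBTab {k : ℕ} (aT bT : Fin k → ℕ) (x : ℕ) : Bool :=
  decide (psum aT (blkPair aT bT x + 1) + psum bT (blkPair aT bT x) ≤ x)

/-- The permutation `σ_T` attached to a table `T = (aT, bT)` (GL recipe). -/
noncomputable def sigmaTab (N : ℕ) {k : ℕ} (aT bT : Fin k → ℕ) : Equiv.Perm (Fin N) :=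
  (Tuple.sort (fun x : Fin N => isBTab aT bT (x : ℕ)))⁻¹

/-! Reindex `Fin (2 * (a + b))` by `Fin (2 * a) ⊕ Fin (2 * b)`, sending the four corner
`a × a` blocks to the first summand and the central `2b × 2b` block to the second. Then
`j(h₁, h₂)`, `J_{a+b}` and `ε` become `fromBlocks h₁ 0 0 h₂`, `fromBlocks J_a 0 0 J_b` and
`fromBlocks 1 0 0 (-1)`. A matrix commutes with the last one iff its off-diagonal blocks satisfy
`B = -B` and `C = -C`, i.e. vanish because `2 ≠ 0`; a block-diagonal matrix is symplectic iff
both of its blocks are; and a symplectic matrix is invertible because `J` is. -/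

open Matrix

section Blocks

variable {m n R : Type*} [Fintype m] [Fintype n]

lemma reindex_mul_reindex [NonUnitalNonAssocSemiring R] (e : m ≃ n) (M N : Matrix m m R) :
    reindex e e M * reindex e e N = reindex e e (M * N) := by
  simp [submatrix_mul_equiv]

lemma reindex_transpose_mul_mul [CommSemiring R] (e : m ≃ n) (M J : Matrix m m R) :
    (reindex e e M)ᵀ * reindex e e J * reindex e e M = reindex e e (Mᵀ * J * M) := by
  simp [submatrix_mul_equiv]

lemma fromBlocks_transpose_mul_mul [CommSemiring R] (A J : Matrix m m R) (D K : Matrix n n R) :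
    (fromBlocks A 0 0 D)ᵀ * fromBlocks J 0 0 K * fromBlocks A 0 0 D =
      fromBlocks (Aᵀ * J * A) 0 0 (Dᵀ * K * D) := by
  simp [fromBlocks_transpose, fromBlocks_multiply]

lemma neg_eq_self_iff_of_two_ne_zero {p q : Type*} [DivisionRing R] (h2 : (2 : R) ≠ 0)
    (B : Matrix p q R) : -B = B ↔ B = 0 := by
  rw [neg_eq_iff_add_eq_zero, ← two_smul R B, smul_eq_zero, or_iff_right h2]

lemma mul_fromBlocks_one_neg_one_comm_iff [DecidableEq m] [DecidableEq n] [DivisionRing R]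
    (h2 : (2 : R) ≠ 0) (M : Matrix (m ⊕ n) (m ⊕ n) R) :
    M * fromBlocks 1 0 0 (-1) = fromBlocks 1 0 0 (-1) * M ↔
      M = fromBlocks M.toBlocks₁₁ 0 0 M.toBlocks₂₂ := by
  conv_lhs => rw [← fromBlocks_toBlocks M]
  conv_rhs => rw [← fromBlocks_toBlocks M]
  simp [fromBlocks_multiply, fromBlocks_inj, eq_comm (a := M.toBlocks₂₁),
    neg_eq_self_iff_of_two_ne_zero h2]

lemma isUnit_of_transpose_mul_mul_eq [CommRing R] [DecidableEq n] {M J : Matrix n n R}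
    (hJ : IsUnit J.det) (h : Mᵀ * J * M = J) : IsUnit M := by
  rw [isUnit_iff_isUnit_det]
  have hdet : M.det * M.det * J.det = 1 * J.det := by
    have := congrArg det h
    rw [det_mul, det_mul, det_transpose] at this
    linear_combination this
  exact IsUnit.of_mul_eq_one _ (hJ.mul_right_cancel hdet)

end Blocks

lemma Jmat_mul_self (N : ℕ) : Jmat F N * Jmat F N = -1 := by
  ext i k
  rw [neg_apply, one_apply, mul_apply, Finset.sum_eq_single (Fin.rev i)]
  · simp only [Jmat, Fin.val_rev, Fin.ext_iff]
    split_ifs <;> first | omega | simp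
  · intro y _ hy
    have : (i : ℕ) + y ≠ 2 * N - 1 := by
      rw [Ne, Fin.ext_iff, Fin.val_rev] at hy
      omega
    simp [Jmat, this]
  · simp

lemma isUnit_det_Jmat (N : ℕ) : IsUnit (Jmat F N).det :=
  isUnit_det_of_right_inverse (B := -Jmat F N) (by rw [mul_neg, Jmat_mul_self, neg_neg])

def blockIndex (a b : ℕ) (x : Fin (2 * (a + b))) : Fin (2 * a) ⊕ Fin (2 * b) :=
  if hx : (x : ℕ) < a then .inl ⟨x, by omega⟩
  else if hx2 : a + 2 * b ≤ (x : ℕ) then .inl ⟨x - 2 * b, by omega⟩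
  else .inr ⟨x - a, by omega⟩

lemma blockIndex_injective (a b : ℕ) : Function.Injective (blockIndex a b) := by
  intro x y h
  simp only [blockIndex] at h
  split_ifs at h <;> simp only [Sum.inl.injEq, Sum.inr.injEq, Fin.ext_iff] at h <;>
    omega

noncomputable def blockEquiv (a b : ℕ) : Fin (2 * a) ⊕ Fin (2 * b) ≃ Fin (2 * (a + b)) :=
  (Equiv.ofBijective _ ((Fintype.bijective_iff_injective_and_card _).mpr
    ⟨blockIndex_injective a b, by simp; ring⟩)).symm

section BlockEquiv

variable {a b : ℕ}

lemma eq_reindex_blockEquiv_iff {R : Type*} (M : Matrix (Fin (2 * (a + b))) (Fin (2 * (a + b))) R)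
    (N : Matrix (Fin (2 * a) ⊕ Fin (2 * b)) (Fin (2 * a) ⊕ Fin (2 * b)) R) :
    M = reindex (blockEquiv a b) (blockEquiv a b) N ↔
      ∀ x y, M x y = N (blockIndex a b x) (blockIndex a b y) :=
  Matrix.ext_iff.symm

lemma jEmbed_eq_reindex (h1 : Matrix (Fin (2 * a)) (Fin (2 * a)) F)
    (h2 : Matrix (Fin (2 * b)) (Fin (2 * b)) F) :
    jEmbed F a b h1 h2 = reindex (blockEquiv a b) (blockEquiv a b) (fromBlocks h1 0 0 h2) := by
  rw [eq_reindex_blockEquiv_iff]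
  intro x y
  simp only [jEmbed, blockIndex]
  split_ifs <;> first | rfl | omega

lemma Jmat_add_eq_reindex :
    Jmat F (a + b) =
      reindex (blockEquiv a b) (blockEquiv a b) (fromBlocks (Jmat F a) 0 0 (Jmat F b)) := by
  rw [eq_reindex_blockEquiv_iff]
  intro x y
  simp only [Jmat, blockIndex]
  split_ifs <;>
    simp only [fromBlocks_apply₁₁, fromBlocks_apply₁₂, fromBlocks_apply₂₁, fromBlocks_apply₂₂,
      Matrix.zero_apply, Jmat] <;>
    (try split_ifs) <;> first | rfl | omega

lemma diagonal_eq_reindex :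
    diagonal (fun i : Fin (2 * (a + b)) =>
        if a ≤ (i : ℕ) ∧ (i : ℕ) < a + 2 * b then (-1 : F) else 1) =
      reindex (blockEquiv a b) (blockEquiv a b) (fromBlocks 1 0 0 (-1)) := by
  have hE : (fromBlocks 1 0 0 (-1) : Matrix (Fin (2 * a) ⊕ Fin (2 * b)) _ F) =
      diagonal (Sum.elim 1 (-1)) := by
    rw [← fromBlocks_diagonal, Pi.neg_def, ← diagonal_neg]
    simp
  rw [hE, reindex_apply, submatrix_diagonal_equiv]
  congr 1
  ext x
  simp only [Function.comp_apply, Equiv.symm_symm, blockEquiv, Equiv.ofBijective_apply, blockIndex]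
  split_ifs <;> simp <;> omega

end BlockEquiv

/-- If `char F ≠ 2`, then `H_{a,b} = j(Sp_a × Sp_b)` equals the centralizer
in `Sp_{a+b}(F)` of `ε = diag(I_a, -I_{2b}, I_a)`. -/
theorem stmt9 (h2 : (2 : F) ≠ 0) (a b : ℕ) :
    HSet F a b =
      { g | g ∈ SpSet F (a + b) ∧
        g.val * Matrix.diagonal
            (fun i : Fin (2 * (a + b)) =>
              if a ≤ (i : ℕ) ∧ (i : ℕ) < a + 2 * b then (-1 : F) else 1) =
          Matrix.diagonal
            (fun i : Fin (2 * (a + b)) =>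
              if a ≤ (i : ℕ) ∧ (i : ℕ) < a + 2 * b then (-1 : F) else 1) * g.val } := by
  set e := blockEquiv a b
  ext g
  simp only [HSet, SpSet, Set.mem_ofPred_eq]
  rw [Jmat_add_eq_reindex, diagonal_eq_reindex]
  constructor
  · rintro ⟨h₁, hh₁, h₂, hh₂, hg⟩
    rw [hg, jEmbed_eq_reindex, reindex_transpose_mul_mul, fromBlocks_transpose_mul_mul, hh₁, hh₂,
      reindex_mul_reindex, reindex_mul_reindex]
    simp [fromBlocks_multiply]
  · rintro ⟨hsp, hcomm⟩
    obtain ⟨M, hM⟩ := (reindex e e).surjective g.val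
    rw [← hM, reindex_mul_reindex, reindex_mul_reindex, (reindex e e).injective.eq_iff,
      mul_fromBlocks_one_neg_one_comm_iff h2] at hcomm
    rw [← hM, reindex_transpose_mul_mul, (reindex e e).injective.eq_iff, hcomm,
      fromBlocks_transpose_mul_mul, fromBlocks_inj] at hsp
    obtain ⟨hA, -, -, hD⟩ := hsp
    have hAu := isUnit_of_transpose_mul_mul_eq (isUnit_det_Jmat F a) hA
    have hDu := isUnit_of_transpose_mul_mul_eq (isUnit_det_Jmat F b) hD
    refine ⟨hAu.unit, hA, hDu.unit, hD, ?_⟩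
    rw [← hM, jEmbed_eq_reindex, IsUnit.unit_spec, IsUnit.unit_spec, ← hcomm]

end Stmt9
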